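/- Let n ≥ 2 and m ≥ 1, and let v_1,…,v_n be additive valuations over M = {1,…,m}. Allocate the items by cycling through the picking sequence p_1 p_2 ⋯ p_{n−1} p_n p_n (of period n+1) until all items are taken, where at each turn the current player takes a remaining item of maximum value to her. Then the resulting allocation (T_1,…,T_n) satisfies v_i(T_i) ≥ (2/(n+1))·μ_i(n, M) for every player i. Consequently, the induced mechanism (with players picking according to their publicly known rankings) is a truthful 2/(n+1)-approximation mechanism for the public rankings model. -/

import Mathlib

open Finset

/-- The total value of a bundle `S` of items under the additive valuation given by `v`. -/
noncomputable def bundleVal {m : ℕ} (v : Fin m → ℝ) (S : Finset (Fin m)) : ℝ :=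
  ∑ j ∈ S, v j

/-- The bundle of items received by player `i` under the allocation `alloc`,
where `alloc j` is the player that receives item `j`.  (Such functions are exactly the
partitions of the items into `n` possibly empty bundles.) -/
def bundleOf {n m : ℕ} (alloc : Fin m → Fin n) (i : Fin n) : Finset (Fin m) :=
  Finset.univ.filter fun j => alloc j = i

/-- The `n`-maximin share of a player with additive valuation `v` over the item set `Fin m`:
the maximum over all partitions of the items into `n` bundles of the minimum bundle value. -/
noncomputable def mms {m : ℕ} (n : ℕ) (v : Fin m → ℝ) : ℝ :=
  ⨆ f : Fin m → Fin n, ⨅ i : Fin n, bundleVal v (bundleOf f i)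

/-- Truthfulness of a mechanism in the cardinal model. -/
def CardTruthful {n m : ℕ} (A : (Fin n → Fin m → ℝ) → (Fin m → Fin n)) : Prop :=
  ∀ V : Fin n → Fin m → ℝ, (∀ i j, 0 ≤ V i j) →
    ∀ (i : Fin n) (v' : Fin m → ℝ), (∀ j, 0 ≤ v' j) →
      bundleVal (V i) (bundleOf (A (Function.update V i v')) i) ≤
        bundleVal (V i) (bundleOf (A V) i)

/-- `ρ`-approximation of a mechanism in the cardinal model. -/
def CardApprox {n m : ℕ} (ρ : ℝ) (A : (Fin n → Fin m → ℝ) → (Fin m → Fin n)) : Prop :=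
  ∀ V : Fin n → Fin m → ℝ, (∀ i j, 0 ≤ V i j) →
    ∀ i : Fin n, ρ * mms n (V i) ≤ bundleVal (V i) (bundleOf (A V) i)

/-- A ranking (strict total order on the items) is encoded as a permutation
`σ : Fin m ≃ Fin m` sending positions to items, `σ 0` being the top item.
A valuation `v` is consistent with the ranking `σ` if the values are
non-increasing along the positions of the ranking. -/
def Consistent {m : ℕ} (v : Fin m → ℝ) (σ : Equiv.Perm (Fin m)) : Prop :=
  ∀ k l : Fin m, k ≤ l → v (σ l) ≤ v (σ k)

/-- Truthfulness of a mechanism in the ordinal model. -/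
def OrdTruthful {n m : ℕ} (A : (Fin n → Equiv.Perm (Fin m)) → (Fin m → Fin n)) : Prop :=
  ∀ (R : Fin n → Equiv.Perm (Fin m)) (i : Fin n) (v : Fin m → ℝ),
    (∀ j, 0 ≤ v j) → Consistent v (R i) →
      ∀ σ' : Equiv.Perm (Fin m),
        bundleVal v (bundleOf (A (Function.update R i σ')) i) ≤
          bundleVal v (bundleOf (A R) i)

/-- `ρ`-approximation of a mechanism in the ordinal model. -/
def OrdApprox {n m : ℕ} (ρ : ℝ) (A : (Fin n → Equiv.Perm (Fin m)) → (Fin m → Fin n)) : Prop :=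
  ∀ V : Fin n → Fin m → ℝ, (∀ i j, 0 ≤ V i j) →
    ∀ R : Fin n → Equiv.Perm (Fin m), (∀ i, Consistent (V i) (R i)) →
      ∀ i : Fin n, ρ * mms n (V i) ≤ bundleVal (V i) (bundleOf (A R) i)

/-- Truthfulness of a mechanism in the public rankings model with publicly known rankings `R`. -/
def PRTruthful {n m : ℕ} (R : Fin n → Equiv.Perm (Fin m))
    (A : (Fin n → Fin m → ℝ) → (Fin m → Fin n)) : Prop :=
  ∀ V : Fin n → Fin m → ℝ, (∀ i j, 0 ≤ V i j) → (∀ i, Consistent (V i) (R i)) →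
    ∀ (i : Fin n) (v' : Fin m → ℝ), (∀ j, 0 ≤ v' j) → Consistent v' (R i) →
      bundleVal (V i) (bundleOf (A (Function.update V i v')) i) ≤
        bundleVal (V i) (bundleOf (A V) i)

/-- `ρ`-approximation in the public rankings model with publicly known rankings `R`. -/
def PRApprox {n m : ℕ} (ρ : ℝ) (R : Fin n → Equiv.Perm (Fin m))
    (A : (Fin n → Fin m → ℝ) → (Fin m → Fin n)) : Prop :=
  ∀ V : Fin n → Fin m → ℝ, (∀ i j, 0 ≤ V i j) → (∀ i, Consistent (V i) (R i)) →
    ∀ i : Fin n, ρ * mms n (V i) ≤ bundleVal (V i) (bundleOf (A V) i)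

/-- The highest-ranked item of the nonempty set `S` according to the ranking `σ`. -/
def bestItem {m : ℕ} (σ : Equiv.Perm (Fin m)) (S : Finset (Fin m)) (h : S.Nonempty) : Fin m :=
  σ ((S.image σ.symm).min' (h.image σ.symm))

/-- The (possibly partial) allocation produced by running the picking sequence `seq` on the
remaining items `S`: at each turn the current player of the sequence takes the highest-ranked
remaining item according to her ranking. -/
def pickAllocList {n m : ℕ} (R : Fin n → Equiv.Perm (Fin m)) :
    List (Fin n) → Finset (Fin m) → Fin m → Option (Fin n)
  | [], _ => fun _ => none
  | p :: rest, S =>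
    if h : S.Nonempty then
      Function.update (pickAllocList R rest (S.erase (bestItem (R p) S h)))
        (bestItem (R p) S h) (some p)
    else fun _ => none

/-- The mechanism for the ordinal model induced by the picking sequence `seq`. -/
def pickMech {n m : ℕ} (seq : List (Fin n)) (R : Fin n → Equiv.Perm (Fin m)) :
    Fin m → Option (Fin n) :=
  pickAllocList R seq Finset.univ

/-- The bundle of player `i` in a possibly partial allocation. -/
def obundleOf {n m : ℕ} (alloc : Fin m → Option (Fin n)) (i : Fin n) : Finset (Fin m) :=
  Finset.univ.filter fun j => alloc j = some i

/-- Truthfulness in the ordinal model, for mechanisms producing possibly partial allocations. -/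
def OrdTruthfulO {n m : ℕ} (A : (Fin n → Equiv.Perm (Fin m)) → (Fin m → Option (Fin n))) : Prop :=
  ∀ (R : Fin n → Equiv.Perm (Fin m)) (i : Fin n) (v : Fin m → ℝ),
    (∀ j, 0 ≤ v j) → Consistent v (R i) →
      ∀ σ' : Equiv.Perm (Fin m),
        bundleVal v (obundleOf (A (Function.update R i σ')) i) ≤
          bundleVal v (obundleOf (A R) i)

/-- `ρ`-approximation in the ordinal model, for mechanisms producing possibly partial
allocations. -/
def OrdApproxO {n m : ℕ} (ρ : ℝ)
    (A : (Fin n → Equiv.Perm (Fin m)) → (Fin m → Option (Fin n))) : Prop :=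
  ∀ V : Fin n → Fin m → ℝ, (∀ i j, 0 ≤ V i j) →
    ∀ R : Fin n → Equiv.Perm (Fin m), (∀ i, Consistent (V i) (R i)) →
      ∀ i : Fin n, ρ * mms n (V i) ≤ bundleVal (V i) (obundleOf (A R) i)

/-- Truthfulness in the public rankings model, for mechanisms producing possibly partial
allocations. -/
def PRTruthfulO {n m : ℕ} (R : Fin n → Equiv.Perm (Fin m))
    (A : (Fin n → Fin m → ℝ) → (Fin m → Option (Fin n))) : Prop :=
  ∀ V : Fin n → Fin m → ℝ, (∀ i j, 0 ≤ V i j) → (∀ i, Consistent (V i) (R i)) →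
    ∀ (i : Fin n) (v' : Fin m → ℝ), (∀ j, 0 ≤ v' j) → Consistent v' (R i) →
      bundleVal (V i) (obundleOf (A (Function.update V i v')) i) ≤
        bundleVal (V i) (obundleOf (A V) i)

/-- `ρ`-approximation in the public rankings model, for mechanisms producing possibly partial
allocations. -/
def PRApproxO {n m : ℕ} (ρ : ℝ) (R : Fin n → Equiv.Perm (Fin m))
    (A : (Fin n → Fin m → ℝ) → (Fin m → Option (Fin n))) : Prop :=
  ∀ V : Fin n → Fin m → ℝ, (∀ i j, 0 ≤ V i j) → (∀ i, Consistent (V i) (R i)) →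
    ∀ i : Fin n, ρ * mms n (V i) ≤ bundleVal (V i) (obundleOf (A V) i)

/-- The picking sequence obtained by cycling `p₁ p₂ ⋯ p_{n-1} pₙ pₙ` (of period `n + 1`) until
all `m` items are taken. -/
def cycleSeq (n m : ℕ) (hn : 0 < n) : List (Fin n) :=
  (List.range m).map fun t => ⟨min (t % (n + 1)) (n - 1), by omega⟩

section Aux

variable {n m : ℕ}

lemma bundleVal_nonneg (v : Fin m → ℝ) (hv : ∀ j, 0 ≤ v j) (S : Finset (Fin m)) :
    0 ≤ bundleVal v S :=
  Finset.sum_nonneg fun j _ => hv j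

lemma bundleVal_empty (v : Fin m → ℝ) : bundleVal v (∅ : Finset (Fin m)) = 0 :=
  Finset.sum_empty

lemma bundleVal_insert {v : Fin m → ℝ} {T : Finset (Fin m)} {z : Fin m} (hz : z ∉ T) :
    bundleVal v (insert z T) = v z + bundleVal v T :=
  Finset.sum_insert hz

lemma bundleVal_erase {v : Fin m → ℝ} {W : Finset (Fin m)} {z : Fin m} (hz : z ∈ W) :
    bundleVal v W = v z + bundleVal v (W.erase z) := by
  unfold bundleVal
  exact (Finset.add_sum_erase _ _ hz).symm

/-- The maximum total value of a sub-bundle of `W` of size at most `c`. -/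
noncomputable def topVal (v : Fin m → ℝ) (c : ℕ) (W : Finset (Fin m)) : ℝ :=
  (W.powerset.filter fun T => T.card ≤ c).sup' ⟨∅, by simp⟩ (bundleVal v)

lemma topVal_nonneg (v : Fin m → ℝ) (c : ℕ) (W : Finset (Fin m)) : 0 ≤ topVal v c W := by
  have h : (∅ : Finset (Fin m)) ∈ W.powerset.filter fun T => T.card ≤ c := by simp
  have h2 : bundleVal v (∅ : Finset (Fin m)) ≤ topVal v c W := Finset.le_sup' (bundleVal v) h
  rw [bundleVal_empty] at h2
  exact h2

lemma topVal_zero (v : Fin m → ℝ) (W : Finset (Fin m)) : topVal v 0 W = 0 := by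
  refine le_antisymm ?_ (topVal_nonneg v 0 W)
  apply Finset.sup'_le
  intro T hT
  simp only [Finset.mem_filter, Finset.mem_powerset, Nat.le_zero, Finset.card_eq_zero] at hT
  rw [hT.2, bundleVal_empty]

lemma topVal_mono (v : Fin m → ℝ) {c c' : ℕ} (h : c ≤ c') (W : Finset (Fin m)) :
    topVal v c W ≤ topVal v c' W := by
  apply Finset.sup'_le
  intro T hT
  simp only [Finset.mem_filter, Finset.mem_powerset] at hT
  exact Finset.le_sup' _ (by
    simp only [Finset.mem_filter, Finset.mem_powerset]
    exact ⟨hT.1, hT.2.trans h⟩)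

lemma topVal_le (v : Fin m → ℝ) {b : ℝ} {W : Finset (Fin m)} (c : ℕ)
    (hb : ∀ w ∈ W, v w ≤ b) (hb0 : 0 ≤ b) : topVal v c W ≤ (c : ℝ) * b := by
  apply Finset.sup'_le
  intro T hT
  simp only [Finset.mem_filter, Finset.mem_powerset] at hT
  calc bundleVal v T ≤ ∑ _j ∈ T, b := Finset.sum_le_sum fun j hj => hb j (hT.1 hj)
    _ = (T.card : ℝ) * b := by rw [Finset.sum_const, nsmul_eq_mul]
    _ ≤ (c : ℝ) * b := by
        apply mul_le_mul_of_nonneg_right _ hb0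
        exact_mod_cast hT.2

lemma topVal_erase_le (v : Fin m → ℝ) {W : Finset (Fin m)} {z : Fin m} (hz : z ∈ W) (c : ℕ) :
    v z + topVal v c (W.erase z) ≤ topVal v (c + 1) W := by
  have h : topVal v c (W.erase z) ≤ topVal v (c + 1) W - v z := by
    apply Finset.sup'_le
    intro T hT
    simp only [Finset.mem_filter, Finset.mem_powerset] at hT
    have hzT : z ∉ T := fun hx => (Finset.notMem_erase z W) (hT.1 hx)
    have hins : insert z T ∈ W.powerset.filter fun T => T.card ≤ c + 1 := by
      simp only [Finset.mem_filter, Finset.mem_powerset]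
      constructor
      · exact Finset.insert_subset hz (hT.1.trans (Finset.erase_subset _ _))
      · rw [Finset.card_insert_of_notMem hzT]; omega
    have h2 : bundleVal v (insert z T) ≤ topVal v (c + 1) W := Finset.le_sup' (bundleVal v) hins
    have hval : bundleVal v (insert z T) = v z + bundleVal v T := Finset.sum_insert hzT
    linarith
  linarith

lemma bestItem_mem {σ : Equiv.Perm (Fin m)} {S : Finset (Fin m)} (h : S.Nonempty) :
    bestItem σ S h ∈ S := by
  unfold bestItem
  have hmem := Finset.min'_mem (S.image σ.symm) (h.image σ.symm)
  obtain ⟨s, hs, hss⟩ := Finset.mem_image.mp hmem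
  rw [← hss]
  simpa using hs

lemma le_bestItem {σ : Equiv.Perm (Fin m)} {v : Fin m → ℝ} (hcons : Consistent v σ)
    {S : Finset (Fin m)} (h : S.Nonempty) {j : Fin m} (hj : j ∈ S) :
    v j ≤ v (bestItem σ S h) := by
  have hjm : σ.symm j ∈ S.image σ.symm := Finset.mem_image_of_mem _ hj
  have hle := Finset.min'_le _ _ hjm
  have h2 := hcons _ _ hle
  simpa [bestItem] using h2

lemma pickAlloc_mem (R : Fin n → Equiv.Perm (Fin m)) :
    ∀ (L : List (Fin n)) (S : Finset (Fin m)) (j : Fin m),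
      pickAllocList R L S j ≠ none → j ∈ S := by
  intro L
  induction L with
  | nil => intro S j h; simp [pickAllocList] at h
  | cons p L ih =>
    intro S j h
    rw [pickAllocList] at h
    by_cases hS : S.Nonempty
    · rw [dif_pos hS] at h
      by_cases hj : j = bestItem (R p) S hS
      · rw [hj]; exact bestItem_mem hS
      · rw [Function.update_of_ne hj] at h
        exact Finset.mem_of_mem_erase (ih _ _ h)
    · rw [dif_neg hS] at h; simp at h

lemma obundle_subset (R : Fin n → Equiv.Perm (Fin m)) (L : List (Fin n)) (S : Finset (Fin m))
    (i : Fin n) : obundleOf (pickAllocList R L S) i ⊆ S := by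
  intro j hj
  simp only [obundleOf, Finset.mem_filter] at hj
  exact pickAlloc_mem R L S j (by rw [hj.2]; simp)

lemma obundle_emptyS (R : Fin n → Equiv.Perm (Fin m)) (L : List (Fin n)) (i : Fin n) :
    obundleOf (pickAllocList R L (∅ : Finset (Fin m))) i = ∅ := by
  rw [Finset.eq_empty_iff_forall_notMem]
  intro j hj
  have := obundle_subset R L ∅ i hj
  simp at this

lemma obundle_nil (R : Fin n → Equiv.Perm (Fin m)) (S : Finset (Fin m)) (i : Fin n) :
    obundleOf (pickAllocList R ([] : List (Fin n)) S) i = ∅ := by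
  rw [Finset.eq_empty_iff_forall_notMem]
  intro j hj
  simp [pickAllocList, obundleOf] at hj

lemma obundle_cons (R : Fin n → Equiv.Perm (Fin m)) (p : Fin n) (L : List (Fin n))
    {S : Finset (Fin m)} (h : S.Nonempty) (i : Fin n) :
    obundleOf (pickAllocList R (p :: L) S) i =
      if p = i then insert (bestItem (R p) S h)
          (obundleOf (pickAllocList R L (S.erase (bestItem (R p) S h))) i)
      else obundleOf (pickAllocList R L (S.erase (bestItem (R p) S h))) i := by
  set b := bestItem (R p) S h with hb
  have hbn : pickAllocList R L (S.erase b) b = none := by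
    by_contra hc
    exact (Finset.notMem_erase b S) (pickAlloc_mem R L _ b hc)
  ext j
  simp only [obundleOf, Finset.mem_filter, Finset.mem_univ, true_and]
  rw [pickAllocList, dif_pos h]
  by_cases hj : j = b
  · subst hj
    rw [Function.update_self]
    by_cases hpi : p = i
    · subst hpi; simp
    · simp only [if_neg hpi, Finset.mem_filter, Finset.mem_univ, true_and, hbn]
      simp [hpi]
  · rw [Function.update_of_ne hj]
    by_cases hpi : p = i
    · simp only [if_pos hpi, Finset.mem_insert, Finset.mem_filter, Finset.mem_univ, true_and]
      simp [hj]
      exact Iff.rfl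
    · simp only [if_neg hpi, Finset.mem_filter, Finset.mem_univ, true_and]
      exact Iff.rfl

lemma val_cons_pick (R : Fin n → Equiv.Perm (Fin m)) (p : Fin n) (v : Fin m → ℝ)
    (L : List (Fin n)) {S : Finset (Fin m)} (h : S.Nonempty) :
    bundleVal v (obundleOf (pickAllocList R (p :: L) S) p) =
      v (bestItem (R p) S h) +
        bundleVal v (obundleOf (pickAllocList R L (S.erase (bestItem (R p) S h))) p) := by
  rw [obundle_cons R p L h p, if_pos rfl]
  exact bundleVal_insert fun hmem =>
    Finset.notMem_erase _ _ (obundle_subset R L _ p hmem)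

lemma val_cons_le (R : Fin n → Equiv.Perm (Fin m)) (p i : Fin n) (v : Fin m → ℝ)
    (hv : ∀ j, 0 ≤ v j) (L : List (Fin n)) {S : Finset (Fin m)} (h : S.Nonempty) :
    bundleVal v (obundleOf (pickAllocList R L (S.erase (bestItem (R p) S h))) i) ≤
      bundleVal v (obundleOf (pickAllocList R (p :: L) S) i) := by
  rw [obundle_cons R p L h i]
  by_cases hpi : p = i
  · rw [if_pos hpi]
    rw [bundleVal_insert (fun hmem =>
      Finset.notMem_erase _ _ (obundle_subset R L _ i hmem))]
    have := hv (bestItem (R p) S h)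
    linarith
  · rw [if_neg hpi]

lemma erase_step (v : Fin m → ℝ) (hv : ∀ j, 0 ≤ v j) {W S : Finset (Fin m)} {b : Fin m}
    (hWS : W ⊆ S) (hmax : ∀ j ∈ S, v j ≤ v b) :
    ∃ W', W' ⊆ W ∧ W' ⊆ S.erase b ∧ bundleVal v W ≤ bundleVal v W' + v b := by
  by_cases hbW : b ∈ W
  · refine ⟨W.erase b, Finset.erase_subset _ _, Finset.erase_subset_erase _ hWS, ?_⟩
    rw [bundleVal_erase hbW]
    linarith
  · rcases W.eq_empty_or_nonempty with rfl | hW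
    · refine ⟨∅, Finset.Subset.refl _, by simp, ?_⟩
      have := hv b
      simp [bundleVal_empty]
      linarith
    · obtain ⟨w₀, hw₀, hmaxW⟩ := Finset.exists_max_image W v hW
      refine ⟨W.erase w₀, Finset.erase_subset _ _, ?_, ?_⟩
      · intro u hu
        rw [Finset.mem_erase]
        obtain ⟨hune, huW⟩ := Finset.mem_erase.mp hu
        exact ⟨fun hub => hbW (hub ▸ huW), hWS huW⟩
      · rw [bundleVal_erase hw₀]
        have := hmax w₀ (hWS hw₀)
        linarith

lemma single_lemma (R : Fin n → Equiv.Perm (Fin m)) (i : Fin n) (v : Fin m → ℝ)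
    (hv : ∀ j, 0 ≤ v j) (hcons : Consistent v (R i)) (L : List (Fin n)) :
    ∀ (S W : Finset (Fin m)) (c : ℕ), c ≤ n → W ⊆ S → S.card ≤ L.length →
      (∀ (t : ℕ) (ht : t < L.length), t % (n + 1) = c → L[t] = i) →
      (bundleVal v W - topVal v c W) / ((n : ℝ) + 1) ≤
        bundleVal v (obundleOf (pickAllocList R L S) i) := by
  have hpos : (0:ℝ) < (n:ℝ) + 1 := by positivity
  have htriv : ∀ (c : ℕ) (B : Finset (Fin m)),
      (bundleVal v (∅ : Finset (Fin m)) - topVal v c (∅ : Finset (Fin m))) / ((n:ℝ)+1) ≤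
        bundleVal v B := by
    intro c B
    have h0 := topVal_nonneg v c (∅ : Finset (Fin m))
    have h1 : bundleVal v (∅ : Finset (Fin m)) - topVal v c ∅ ≤ 0 := by
      rw [bundleVal_empty]; linarith
    exact le_trans (div_nonpos_of_nonpos_of_nonneg h1 (le_of_lt hpos))
      (bundleVal_nonneg v hv _)
  induction L with
  | nil =>
    intro S W c hc hWS hcard hpat
    have hS : S = ∅ := Finset.card_eq_zero.mp (Nat.le_zero.mp hcard)
    subst hS
    have hW : W = ∅ := Finset.subset_empty.mp hWS
    subst hW
    exact htriv c _
  | cons p L ih =>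
    intro S W c hc hWS hcard hpat
    rcases W.eq_empty_or_nonempty with rfl | hWne
    · exact htriv c _
    have hS : S.Nonempty := hWne.mono hWS
    have hbS : bestItem (R p) S hS ∈ S := bestItem_mem hS
    have hcard' : (S.erase (bestItem (R p) S hS)).card ≤ L.length := by
      rw [Finset.card_erase_of_mem hbS]
      simp only [List.length_cons] at hcard
      omega
    rcases c with _ | c'
    · -- c = 0 : it is player i's pick
      have hpi : p = i := by
        have := hpat 0 (by simp) (Nat.zero_mod _)
        simpa using this
      subst hpi
      have hmax : ∀ j ∈ S, v j ≤ v (bestItem (R p) S hS) :=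
        fun j hj => le_bestItem hcons hS hj
      obtain ⟨W', hW'W, hW'sub, hWval⟩ := erase_step v hv hWS hmax
      have hpat' : ∀ (t : ℕ) (ht : t < L.length), t % (n + 1) = n → L[t] = p := by
        intro t ht hmod
        have h2 : (t + 1) % (n + 1) = 0 := by
          rw [← Nat.mod_add_mod, hmod, Nat.mod_self]
        have := hpat (t + 1) (by simp only [List.length_cons]; omega) h2
        simpa using this
      have ihh := ih (S.erase (bestItem (R p) S hS)) W' n le_rfl hW'sub hcard' hpat'
      have htop : topVal v n W' ≤ (n : ℝ) * v (bestItem (R p) S hS) :=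
        topVal_le v n (fun u hu => hmax u (hWS (hW'W hu))) (hv _)
      rw [val_cons_pick R p v L hS, topVal_zero]
      rw [div_le_iff₀ hpos] at ihh ⊢
      have hvb := hv (bestItem (R p) S hS)
      nlinarith [hWval, htop, ihh]
    · -- c = c' + 1 : an adversary step
      have hc'n : c' ≤ n := by omega
      have hpat' : ∀ (t : ℕ) (ht : t < L.length), t % (n + 1) = c' → L[t] = i := by
        intro t ht hmod
        have h2 : (t + 1) % (n + 1) = c' + 1 := by
          rw [← Nat.mod_add_mod, hmod, Nat.mod_eq_of_lt (by omega)]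
        have := hpat (t + 1) (by simp only [List.length_cons]; omega) h2
        simpa using this
      have ihh := ih (S.erase (bestItem (R p) S hS)) (W.erase (bestItem (R p) S hS)) c' hc'n
        (Finset.erase_subset_erase _ hWS) hcard' hpat'
      have key : bundleVal v W - topVal v (c' + 1) W ≤
          bundleVal v (W.erase (bestItem (R p) S hS)) -
            topVal v c' (W.erase (bestItem (R p) S hS)) := by
        by_cases hbW : bestItem (R p) S hS ∈ W
        · have h1 := bundleVal_erase (v := v) hbW
          have h2 := topVal_erase_le v hbW c'
          linarith
        · rw [Finset.erase_eq_of_notMem hbW]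
          have := topVal_mono v (Nat.le_succ c') W
          linarith
      refine le_trans ?_ (val_cons_le R p i v hv L hS)
      refine le_trans ?_ ihh
      gcongr

lemma double_small (hn : 1 ≤ n) (v : Fin m → ℝ) (hv : ∀ j, 0 ≤ v j)
    {W S : Finset (Fin m)} {b : Fin m} (hWS : W ⊆ S)
    (hmax : ∀ j ∈ S, v j ≤ v b) (hS1 : S.card ≤ 1) (X : ℝ) (hX : 0 ≤ X) :
    2 * (bundleVal v W - topVal v 0 W) / ((n:ℝ) + 1) ≤ v b + X := by
  have hpos : (0:ℝ) < (n:ℝ) + 1 := by positivity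
  rw [topVal_zero]
  have h2 : bundleVal v W ≤ W.card • v b :=
    Finset.sum_le_card_nsmul W v (v b) (fun x hx => hmax x (hWS hx))
  have h3 : W.card ≤ 1 := le_trans (Finset.card_le_card hWS) hS1
  have h1 : bundleVal v W ≤ v b := by
    have h4 : (W.card : ℝ) * v b ≤ 1 * v b :=
      mul_le_mul_of_nonneg_right (by exact_mod_cast h3) (hv b)
    rw [nsmul_eq_mul] at h2
    linarith
  have hcn : (1:ℝ) ≤ (n:ℝ) := by exact_mod_cast hn
  rw [div_le_iff₀ hpos]
  have hvb := hv b
  nlinarith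

lemma double_lemma (R : Fin n → Equiv.Perm (Fin m)) (i : Fin n) (v : Fin m → ℝ)
    (hv : ∀ j, 0 ≤ v j) (hcons : Consistent v (R i)) (hn : 1 ≤ n) :
    ∀ (N : ℕ) (L : List (Fin n)) (S W : Finset (Fin m)) (c : ℕ), L.length ≤ N →
      c + 1 ≤ n → W ⊆ S → S.card ≤ L.length →
      (∀ (t : ℕ) (ht : t < L.length), (t % (n + 1) = c ∨ t % (n + 1) = c + 1) → L[t] = i) →
      2 * (bundleVal v W - topVal v c W) / ((n : ℝ) + 1) ≤
        bundleVal v (obundleOf (pickAllocList R L S) i) := by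
  have hpos : (0:ℝ) < (n:ℝ) + 1 := by positivity
  have htriv : ∀ (c : ℕ) (B : Finset (Fin m)),
      2 * (bundleVal v (∅ : Finset (Fin m)) - topVal v c (∅ : Finset (Fin m))) / ((n:ℝ)+1) ≤
        bundleVal v B := by
    intro c B
    have h0 := topVal_nonneg v c (∅ : Finset (Fin m))
    have h1 : 2 * (bundleVal v (∅ : Finset (Fin m)) - topVal v c ∅) ≤ 0 := by
      rw [bundleVal_empty]; linarith
    exact le_trans (div_nonpos_of_nonpos_of_nonneg h1 (le_of_lt hpos))
      (bundleVal_nonneg v hv _)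
  intro N
  induction N with
  | zero =>
    intro L S W c hLN hc hWS hcard hpat
    have hS : S = ∅ := Finset.card_eq_zero.mp (by omega)
    subst hS
    have hW : W = ∅ := Finset.subset_empty.mp hWS
    subst hW
    exact htriv c _
  | succ N ih =>
    intro L S W c hLN hc hWS hcard hpat
    cases L with
    | nil =>
      have hS : S = ∅ := Finset.card_eq_zero.mp (by simpa using hcard)
      subst hS
      have hW : W = ∅ := Finset.subset_empty.mp hWS
      subst hW
      exact htriv c _
    | cons p L' =>
      rcases W.eq_empty_or_nonempty with rfl | hWne
      · exact htriv c _
      have hS : S.Nonempty := hWne.mono hWS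
      have hbS : bestItem (R p) S hS ∈ S := bestItem_mem hS
      rcases c with _ | c'
      · -- c = 0 : player i picks now and next
        have hpi : p = i := by
          have := hpat 0 (by simp) (Or.inl (Nat.zero_mod _))
          simpa using this
        subst hpi
        have hmax1 : ∀ j ∈ S, v j ≤ v (bestItem (R p) S hS) :=
          fun j hj => le_bestItem hcons hS hj
        rw [val_cons_pick R p v L' hS]
        cases L' with
        | nil =>
          have hS1 : S.card ≤ 1 := by simpa using hcard
          rw [obundle_nil, bundleVal_empty]
          exact double_small hn v hv hWS hmax1 hS1 0 le_rfl
        | cons q L'' =>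
          have hqi : p = q := by
            have h1mod : 1 % (n + 1) = 1 := Nat.mod_eq_of_lt (by omega)
            have := hpat 1 (by simp) (Or.inr (by simpa using h1mod))
            exact (by simpa using this : q = p).symm
          subst hqi
          by_cases hS' : (S.erase (bestItem (R p) S hS)).Nonempty
          · set b₁ := bestItem (R p) S hS with hb1def
            set S' := S.erase b₁ with hS'def
            set b₂ := bestItem (R p) S' hS' with hb2def
            have hmax2 : ∀ j ∈ S', v j ≤ v b₂ := fun j hj => le_bestItem hcons hS' hj
            have hb2S' : b₂ ∈ S' := bestItem_mem hS'
            have hb21 : v b₂ ≤ v b₁ := hmax1 _ (Finset.mem_of_mem_erase hb2S')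
            rw [val_cons_pick R p v L'' hS']
            obtain ⟨W₁, hW₁W, hW₁sub, hW₁val⟩ := erase_step v hv hWS hmax1
            obtain ⟨W₂, hW₂W, hW₂sub, hW₂val⟩ := erase_step v hv hW₁sub hmax2
            have hcard'' : (S'.erase b₂).card ≤ L''.length := by
              rw [Finset.card_erase_of_mem hb2S', hS'def, Finset.card_erase_of_mem hbS]
              simp only [List.length_cons] at hcard
              omega
            have hpat'' : ∀ (t : ℕ) (ht : t < L''.length),
                (t % (n + 1) = n - 1 ∨ t % (n + 1) = (n - 1) + 1) → L''[t] = p := by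
              intro t ht hmod
              have hlen : t + 2 < (p :: p :: L'').length := by
                simp only [List.length_cons]; omega
              rcases hmod with hmod | hmod
              · have h2 : (t + 2) % (n + 1) = 0 := by
                  rw [← Nat.mod_add_mod, hmod]
                  have he : n - 1 + 2 = n + 1 := by omega
                  rw [he, Nat.mod_self]
                have := hpat (t + 2) hlen (Or.inl h2)
                simpa using this
              · have h2 : (t + 2) % (n + 1) = 1 := by
                  rw [← Nat.mod_add_mod, hmod]
                  have he : (n - 1) + 1 + 2 = (n + 1) + 1 := by omega
                  rw [he, Nat.add_mod_left]
                  exact Nat.mod_eq_of_lt (by omega)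
                have := hpat (t + 2) hlen (Or.inr h2)
                simpa using this
            have ihh := ih L'' (S'.erase b₂) W₂ (n - 1)
              (by simp only [List.length_cons] at hLN; omega) (by omega) hW₂sub hcard'' hpat''
            have htop : topVal v (n - 1) W₂ ≤ ((n:ℝ) - 1) * v b₂ := by
              have h5 := topVal_le v (n - 1)
                (fun u hu => hmax2 u (hW₁sub (hW₂W hu))) (hv b₂)
              have hcast : ((n - 1 : ℕ) : ℝ) = (n:ℝ) - 1 := by
                have : (1:ℕ) ≤ n := hn
                push_cast [this]
                ring
              rw [hcast] at h5
              exact h5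
            rw [topVal_zero]
            rw [div_le_iff₀ hpos] at ihh ⊢
            have hvb1 := hv b₁
            have hvb2 := hv b₂
            have hcn : (1:ℝ) ≤ (n:ℝ) := by exact_mod_cast hn
            have hprod : ((n:ℝ) - 1) * v b₂ ≤ ((n:ℝ) - 1) * v b₁ :=
              mul_le_mul_of_nonneg_left hb21 (by linarith)
            nlinarith [ihh, hW₁val, hW₂val, htop, hprod,
              bundleVal_nonneg v hv (obundleOf (pickAllocList R L'' (S'.erase b₂)) p)]
          · have hSE : S.erase (bestItem (R p) S hS) = ∅ :=
              Finset.not_nonempty_iff_eq_empty.mp hS'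
            have hS1 : S.card ≤ 1 := by
              have h6 := Finset.card_erase_of_mem hbS
              rw [hSE] at h6
              simp at h6
              omega
            rw [hSE, obundle_emptyS, bundleVal_empty]
            exact double_small hn v hv hWS hmax1 hS1 0 le_rfl
      · -- c = c' + 1 : an adversary step
        have hcard' : (S.erase (bestItem (R p) S hS)).card ≤ L'.length := by
          rw [Finset.card_erase_of_mem hbS]
          simp only [List.length_cons] at hcard
          omega
        have hpat' : ∀ (t : ℕ) (ht : t < L'.length),
            (t % (n + 1) = c' ∨ t % (n + 1) = c' + 1) → L'[t] = i := by
          intro t ht hmod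
          have hlen : t + 1 < (p :: L').length := by
            simp only [List.length_cons]; omega
          rcases hmod with hmod | hmod
          · have h2 : (t + 1) % (n + 1) = c' + 1 := by
              rw [← Nat.mod_add_mod, hmod, Nat.mod_eq_of_lt (by omega)]
            have := hpat (t + 1) hlen (Or.inl h2)
            simpa using this
          · have h2 : (t + 1) % (n + 1) = c' + 1 + 1 := by
              rw [← Nat.mod_add_mod, hmod, Nat.mod_eq_of_lt (by omega)]
            have := hpat (t + 1) hlen (Or.inr h2)
            simpa using this
        have ihh := ih L' (S.erase (bestItem (R p) S hS)) (W.erase (bestItem (R p) S hS)) c'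
          (by simp only [List.length_cons] at hLN; omega) (by omega)
          (Finset.erase_subset_erase _ hWS) hcard' hpat'
        have key : bundleVal v W - topVal v (c' + 1) W ≤
            bundleVal v (W.erase (bestItem (R p) S hS)) -
              topVal v c' (W.erase (bestItem (R p) S hS)) := by
          by_cases hbW : bestItem (R p) S hS ∈ W
          · have h1 := bundleVal_erase (v := v) hbW
            have h2 := topVal_erase_le v hbW c'
            linarith
          · rw [Finset.erase_eq_of_notMem hbW]
            have := topVal_mono v (Nat.le_succ c') W
            linarith
        refine le_trans ?_ (val_cons_le R p i v hv L' hS)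
        refine le_trans ?_ ihh
        gcongr

/-- The remaining set of items after running the picking process for a list of players. -/
def peelState (R : Fin n → Equiv.Perm (Fin m)) : List (Fin n) → Finset (Fin m) → Finset (Fin m)
  | [], S => S
  | p :: L, S =>
    if h : S.Nonempty then peelState R L (S.erase (bestItem (R p) S h)) else S

lemma peelState_card (R : Fin n → Equiv.Perm (Fin m)) :
    ∀ (L : List (Fin n)) (S : Finset (Fin m)), L.length ≤ S.card →
      (peelState R L S).card = S.card - L.length := by
  intro L
  induction L with
  | nil => intro S h; simp [peelState]
  | cons p L ih =>
    intro S h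
    simp only [List.length_cons] at h
    have hS : S.Nonempty := Finset.card_pos.mp (by omega)
    rw [peelState, dif_pos hS]
    rw [ih _ (by rw [Finset.card_erase_of_mem (bestItem_mem hS)]; omega)]
    rw [Finset.card_erase_of_mem (bestItem_mem hS)]
    simp only [List.length_cons]
    omega

lemma peel_le (R : Fin n → Equiv.Perm (Fin m)) (i : Fin n) (v : Fin m → ℝ)
    (hv : ∀ j, 0 ≤ v j) :
    ∀ (L1 L2 : List (Fin n)) (S : Finset (Fin m)),
      bundleVal v (obundleOf (pickAllocList R L2 (peelState R L1 S)) i) ≤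
        bundleVal v (obundleOf (pickAllocList R (L1 ++ L2) S) i) := by
  intro L1
  induction L1 with
  | nil => intro L2 S; simp [peelState]
  | cons p L1 ih =>
    intro L2 S
    by_cases hS : S.Nonempty
    · rw [peelState, dif_pos hS]
      calc bundleVal v (obundleOf
            (pickAllocList R L2 (peelState R L1 (S.erase (bestItem (R p) S hS)))) i)
          ≤ bundleVal v (obundleOf
            (pickAllocList R (L1 ++ L2) (S.erase (bestItem (R p) S hS))) i) := ih L2 _
        _ ≤ _ := val_cons_le R p i v hv (L1 ++ L2) hS
    · have hSE : S = ∅ := Finset.not_nonempty_iff_eq_empty.mp hS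
      subst hSE
      rw [peelState, dif_neg hS, obundle_emptyS, bundleVal_empty]
      exact bundleVal_nonneg v hv _

lemma mms_nonneg (hn : 0 < n) (v : Fin m → ℝ) (hv : ∀ j, 0 ≤ v j) : 0 ≤ mms n v := by
  have hne : Nonempty (Fin n) := ⟨⟨0, hn⟩⟩
  set F : (Fin m → Fin n) → ℝ := fun f => ⨅ j : Fin n, bundleVal v (bundleOf f j) with hF
  have h1 : (0:ℝ) ≤ F (fun _ => ⟨0, hn⟩) := le_ciInf fun j => bundleVal_nonneg v hv _
  have h2 : F (fun _ => ⟨0, hn⟩) ≤ ⨆ g, F g :=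
    le_ciSup (Set.Finite.bddAbove (Set.finite_range F)) _
  exact le_trans h1 h2

lemma mms_exists (hn : 0 < n) (v : Fin m → ℝ) :
    ∃ f : Fin m → Fin n, ∀ j, mms n v ≤ bundleVal v (bundleOf f j) := by
  have hne : Nonempty (Fin n) := ⟨⟨0, hn⟩⟩
  set F : (Fin m → Fin n) → ℝ := fun f => ⨅ j : Fin n, bundleVal v (bundleOf f j) with hF
  obtain ⟨f, hf⟩ := Finite.exists_max F
  refine ⟨f, fun j => ?_⟩
  have h1 : mms n v ≤ F f := ciSup_le hf
  refine le_trans h1 ?_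
  exact ciInf_le (Set.Finite.bddBelow (Set.finite_range _)) j

lemma mms_zero (hn : 0 < n) (hmn : m < n) (v : Fin m → ℝ) (hv : ∀ j, 0 ≤ v j) :
    mms n v = 0 := by
  have hne : Nonempty (Fin n) := ⟨⟨0, hn⟩⟩
  refine le_antisymm ?_ (mms_nonneg hn v hv)
  have hgoal : ∀ f : Fin m → Fin n, (⨅ j : Fin n, bundleVal v (bundleOf f j)) ≤ 0 := ?_
  · exact ciSup_le hgoal
  intro f
  have hns : ¬ Function.Surjective f := by
    intro hs
    have := Fintype.card_le_of_surjective f hs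
    simp [Fintype.card_fin] at this
    omega
  rw [Function.Surjective] at hns
  push_neg at hns
  obtain ⟨j₀, hj₀⟩ := hns
  have hB : bundleOf f j₀ = ∅ := by
    rw [Finset.eq_empty_iff_forall_notMem]
    intro x hx
    simp [bundleOf] at hx
    exact hj₀ x hx
  refine le_trans (ciInf_le (Set.Finite.bddBelow (Set.finite_range _)) j₀) ?_
  rw [hB, bundleVal_empty]

lemma cycleSeq_get (hn : 0 < n) (t : ℕ) (ht : t < (cycleSeq n m hn).length) :
    (cycleSeq n m hn)[t] = (⟨min (t % (n + 1)) (n - 1), by omega⟩ : Fin n) := by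
  simp [cycleSeq]

lemma main_bound (hn : 2 ≤ n) (hm : 1 ≤ m)
    (V : Fin n → Fin m → ℝ) (hV : ∀ i j, 0 ≤ V i j)
    (R : Fin n → Equiv.Perm (Fin m)) (hR : ∀ i, Consistent (V i) (R i)) (i : Fin n) :
    (2 : ℝ) / ((n : ℝ) + 1) * mms n (V i) ≤
      bundleVal (V i) (obundleOf (pickMech (cycleSeq n m (Nat.lt_of_lt_of_le Nat.zero_lt_two hn)) R) i) := by
  classical
  set v := V i with hvdef
  have hv : ∀ j, 0 ≤ v j := hV i
  have hcons : Consistent v (R i) := hR i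
  have hpos : (0:ℝ) < (n:ℝ) + 1 := by positivity
  have hrhs0 : 0 ≤ bundleVal v (obundleOf (pickMech (cycleSeq n m (Nat.lt_of_lt_of_le Nat.zero_lt_two hn)) R) i) :=
    bundleVal_nonneg v hv _
  by_cases hmn : m < n
  · have h0 : mms n v = 0 := mms_zero (Nat.lt_of_lt_of_le Nat.zero_lt_two hn) hmn v hv
    rw [h0, mul_zero]
    exact hrhs0
  push_neg at hmn
  obtain ⟨f, hf⟩ := mms_exists (Nat.lt_of_lt_of_le Nat.zero_lt_two hn) v
  set μ := mms n v with hμdef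
  have hμ0 : 0 ≤ μ := mms_nonneg (Nat.lt_of_lt_of_le Nat.zero_lt_two hn) v hv
  set k := (i : ℕ) with hkdef
  have hkn : k < n := i.isLt
  have hk_m : k ≤ m := by omega
  set L : List (Fin n) := cycleSeq n m (Nat.lt_of_lt_of_le Nat.zero_lt_two hn) with hLdef
  have hLlen : L.length = m := by simp [hLdef, cycleSeq]
  set L1 := L.take k with hL1def
  set L2 := L.drop k with hL2def
  have hL1len : L1.length = k := by
    rw [hL1def, List.length_take, hLlen]
    omega
  have hL2len : L2.length = m - k := by
    rw [hL2def, List.length_drop, hLlen]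
  set S₁ := peelState R L1 (Finset.univ : Finset (Fin m)) with hS₁def
  have hS₁card : S₁.card = m - k := by
    rw [hS₁def, peelState_card R L1 Finset.univ (by rw [hL1len]; simp; omega)]
    rw [hL1len]
    simp
  set G := Finset.univ.filter fun j : Fin n => bundleOf f j ⊆ S₁ with hGdef
  have hGcard : n - k ≤ G.card := by
    set Gc := Finset.univ.filter fun j : Fin n => ¬ bundleOf f j ⊆ S₁ with hGcdef
    have hsum : G.card + Gc.card = n := by
      rw [hGdef, hGcdef, Finset.card_filter_add_card_filter_not]
      simp
    have hCcard : (Finset.univ \ S₁).card = k := by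
      rw [Finset.card_sdiff_of_subset (Finset.subset_univ _), hS₁card]
      simp only [Finset.card_univ, Fintype.card_fin]
      omega
    have hwit : ∀ j ∈ Gc, ∃ x : Fin m, x ∈ bundleOf f j ∧ x ∉ S₁ := by
      intro j hj
      rw [hGcdef, Finset.mem_filter] at hj
      obtain ⟨x, hx1, hx2⟩ := Finset.not_subset.mp hj.2
      exact ⟨x, hx1, hx2⟩
    set w : Fin n → Fin m := fun j =>
      if h : ∃ x : Fin m, x ∈ bundleOf f j ∧ x ∉ S₁ then h.choose else ⟨0, by omega⟩ with hwdef
    have hw : ∀ j ∈ Gc, w j ∈ bundleOf f j ∧ w j ∉ S₁ := by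
      intro j hj
      rw [hwdef]
      simp only
      rw [dif_pos (hwit j hj)]
      exact (hwit j hj).choose_spec
    have hGc : Gc.card ≤ (Finset.univ \ S₁).card := by
      apply Finset.card_le_card_of_injOn w
      · intro j hj
        rw [Finset.mem_coe, Finset.mem_sdiff]
        exact ⟨Finset.mem_univ _, (hw j hj).2⟩
      · intro a ha b hb hab
        have h1 : f (w a) = a := by
          have := (hw a (Finset.mem_coe.mp ha)).1
          simp only [bundleOf, Finset.mem_filter] at this
          exact this.2
        have h2 : f (w b) = b := by
          have := (hw b (Finset.mem_coe.mp hb)).1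
          simp only [bundleOf, Finset.mem_filter] at this
          exact this.2
        rw [← h1, ← h2, hab]
    omega
  set W := G.biUnion (bundleOf f) with hWdef
  have hWsub : W ⊆ S₁ := by
    rw [hWdef]
    apply Finset.biUnion_subset.mpr
    intro j hj
    rw [hGdef, Finset.mem_filter] at hj
    exact hj.2
  have hWval : ((n:ℝ) - (k:ℝ)) * μ ≤ bundleVal v W := by
    have hdisj : (↑G : Set (Fin n)).PairwiseDisjoint (bundleOf f) := by
      intro a _ b _ hab
      simp only [Function.onFun]
      rw [Finset.disjoint_left]
      intro x hxa hxb
      simp only [bundleOf, Finset.mem_filter] at hxa hxb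
      exact hab (by rw [← hxa.2, ← hxb.2])
    have hsum : bundleVal v W = ∑ j ∈ G, bundleVal v (bundleOf f j) := by
      rw [hWdef]
      unfold bundleVal
      exact Finset.sum_biUnion hdisj
    have h1 : (G.card : ℝ) * μ ≤ ∑ j ∈ G, bundleVal v (bundleOf f j) := by
      have := Finset.card_nsmul_le_sum G (fun j => bundleVal v (bundleOf f j)) μ
        (fun j _ => hf j)
      rw [nsmul_eq_mul] at this
      exact this
    have h2 : ((n:ℝ) - (k:ℝ)) * μ ≤ (G.card : ℝ) * μ := by
      apply mul_le_mul_of_nonneg_right _ hμ0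
      have : ((n - k : ℕ) : ℝ) ≤ (G.card : ℝ) := by exact_mod_cast hGcard
      have hc2 : ((n - k : ℕ) : ℝ) = (n:ℝ) - (k:ℝ) := by
        have : k ≤ n := by omega
        push_cast [this]
        ring
      linarith [hc2 ▸ this]
    rw [hsum]
    linarith
  have happend : L1 ++ L2 = L := List.take_append_drop k L
  have hpeel := peel_le R i v hv L1 L2 Finset.univ
  rw [happend] at hpeel
  have hgoal_eq : bundleVal v (obundleOf (pickMech (cycleSeq n m (Nat.lt_of_lt_of_le Nat.zero_lt_two hn)) R) i) =
      bundleVal v (obundleOf (pickAllocList R L Finset.univ) i) := rfl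
  have hkmod : k % (n + 1) = k := Nat.mod_eq_of_lt (by omega)
  have hgetL2 : ∀ (t : ℕ) (ht : t < L2.length),
      L2[t] = (⟨min ((k + t) % (n + 1)) (n - 1), by omega⟩ : Fin n) := by
    intro t ht
    have ht2 : k + t < m := by
      rw [hL2len] at ht
      omega
    have h3 : L2[t] = L[k + t]'(by rw [hLlen]; omega) := List.getElem_drop
    rw [h3]
    exact cycleSeq_get (Nat.lt_of_lt_of_le Nat.zero_lt_two hn) (k + t) (by simpa [cycleSeq] using ht2)
  by_cases hklast : k = n - 1
  · -- player i is the double picker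
    have hpat : ∀ (t : ℕ) (ht : t < L2.length),
        (t % (n + 1) = 0 ∨ t % (n + 1) = 0 + 1) → L2[t] = i := by
      intro t ht hmod
      rw [hgetL2 t ht]
      rcases hmod with hmod | hmod
      · have h2 : (k + t) % (n + 1) = k := by
          rw [Nat.add_mod, hmod, hkmod, Nat.add_zero, hkmod]
        apply Fin.ext
        simp only
        rw [h2]
        omega
      · have h2 : (k + t) % (n + 1) = n := by
          rw [Nat.add_mod, hmod, hkmod]
          have he : k + 1 = n := by omega
          rw [he, Nat.mod_eq_of_lt (by omega)]
        apply Fin.ext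
        simp only
        rw [h2]
        omega
    have hdl := double_lemma R i v hv hcons (by omega) L2.length L2 S₁ W 0 le_rfl
      (by omega) hWsub (by omega) hpat
    rw [topVal_zero] at hdl
    have hWμ : μ ≤ bundleVal v W := by
      have hc3 : ((n:ℝ) - (k:ℝ)) = 1 := by
        have : (k:ℝ) = (n:ℝ) - 1 := by
          have h4 : k + 1 = n := by omega
          have : ((k:ℝ) + 1) = (n:ℝ) := by exact_mod_cast h4
          linarith
        linarith
      rw [hc3] at hWval
      linarith
    rw [hgoal_eq]
    calc (2:ℝ) / ((n:ℝ) + 1) * μ = 2 * (μ - 0) / ((n:ℝ) + 1) := by ring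
      _ ≤ 2 * (bundleVal v W - 0) / ((n:ℝ) + 1) := by gcongr
      _ ≤ bundleVal v (obundleOf (pickAllocList R L2 S₁) i) := by
          simpa using hdl
      _ ≤ _ := hpeel
  · -- player i picks once per round
    have hk2 : k + 2 ≤ n := by omega
    have hpat : ∀ (t : ℕ) (ht : t < L2.length), t % (n + 1) = 0 → L2[t] = i := by
      intro t ht hmod
      rw [hgetL2 t ht]
      have h2 : (k + t) % (n + 1) = k := by
        rw [Nat.add_mod, hmod, hkmod, Nat.add_zero, hkmod]
      apply Fin.ext
      simp only
      rw [h2]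
      omega
    have hsl := single_lemma R i v hv hcons L2 S₁ W 0 (by omega) hWsub (by omega) hpat
    rw [topVal_zero] at hsl
    have hWμ : 2 * μ ≤ bundleVal v W := by
      have hc3 : (2:ℝ) ≤ ((n:ℝ) - (k:ℝ)) := by
        have : ((k:ℝ) + 2) ≤ (n:ℝ) := by exact_mod_cast hk2
        linarith
      nlinarith
    rw [hgoal_eq]
    calc (2:ℝ) / ((n:ℝ) + 1) * μ = (2 * μ - 0) / ((n:ℝ) + 1) := by ring
      _ ≤ (bundleVal v W - 0) / ((n:ℝ) + 1) := by gcongr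
      _ ≤ bundleVal v (obundleOf (pickAllocList R L2 S₁) i) := by
          simpa using hsl
      _ ≤ _ := hpeel

end Aux

/-- For `n ≥ 2` players and `m ≥ 1` items: allocating the items by cycling
through the picking sequence `p₁ p₂ ⋯ p_{n-1} pₙ pₙ`, with each player taking at her turn a
remaining item of maximum value to her (equivalently, the top remaining item of any ranking
consistent with her valuation), gives every player at least `2/(n+1)` of her maximin share.
Consequently, the induced mechanism (players picking according to their publicly known rankings)
is a truthful `2/(n+1)`-approximation mechanism for the public rankings model. -/
theorem stmt16 (n m : ℕ) (hn : 2 ≤ n) (hm : 1 ≤ m) :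
    (∀ V : Fin n → Fin m → ℝ, (∀ i j, 0 ≤ V i j) →
      ∀ R : Fin n → Equiv.Perm (Fin m), (∀ i, Consistent (V i) (R i)) →
        ∀ i : Fin n, (2 : ℝ) / ((n : ℝ) + 1) * mms n (V i) ≤
          bundleVal (V i) (obundleOf (pickMech (cycleSeq n m (by omega)) R) i)) ∧
    (∀ R : Fin n → Equiv.Perm (Fin m),
      PRTruthfulO R (fun _ => pickMech (cycleSeq n m (by omega)) R) ∧
      PRApproxO ((2 : ℝ) / ((n : ℝ) + 1)) R (fun _ => pickMech (cycleSeq n m (by omega)) R)) := by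
  constructor
  · intro V hV R hR i
    exact main_bound hn hm V hV R hR i
  · intro R
    constructor
    · intro V hV hc i v' hv' hc'
      exact le_rfl
    · intro V hV hc i
      exact main_bound hn hm V hV R hc i
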